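/- arXiv:1102.5170 — 4 statements merged into one kernel-verified Lean document; each statement's English description precedes it below -/
import Mathlib

section
/- Let A, B be nonzero positive semidefinite d×d complex matrices. Then: (i) sup(A/B) = ‖B^{−1/2} A B^{−1/2}‖_∞ if range(A) ⊆ range(B), and sup(A/B) = ∞ otherwise; (ii) inf(A/B) = ‖A^{−1/2} B A^{−1/2}‖_∞^{−1} if range(B) ⊆ range(A), and inf(A/B) = 0 otherwise; (iii) h_{S₊}(A,B) = ln(‖A^{−1/2} B A^{−1/2}‖_∞ · ‖B^{−1/2} A B^{−1/2}‖_∞) if range(A) = range(B), and h_{S₊}(A,B) = ∞ otherwise. -/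
open scoped ComplexOrder
open Matrix

noncomputable section

variable {n : Type*} [Fintype n] [DecidableEq n]

/-- `sup(A/B) := inf {λ : ℝ | A ≤ λ B}` w.r.t. the Loewner order (`⊤` if no such `λ` exists). -/
def msupRatio (A B : Matrix n n ℂ) : EReal :=
  sInf ((fun l : ℝ => (l : EReal)) '' {l : ℝ | (l • B - A).PosSemidef})

/-- `inf(A/B) := sup {λ : ℝ | λ B ≤ A}` w.r.t. the Loewner order. -/
def minfRatio (A B : Matrix n n ℂ) : EReal :=
  sSup ((fun l : ℝ => (l : EReal)) '' {l : ℝ | (A - l • B).PosSemidef})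

/-- Hilbert's projective metric `h_{S₊}(A,B) = ln (sup(A/B) · sup(B/A)) ∈ [0,∞]`
w.r.t. the positive semidefinite cone. -/
def mHilbert (A B : Matrix n n ℂ) : EReal :=
  if msupRatio A B = ⊤ ∨ msupRatio B A = ⊤ then ⊤
  else ((Real.log ((msupRatio A B).toReal * (msupRatio B A).toReal) : ℝ) : EReal)

/-- `tanh(x/4)`, with the convention `tanh(⊤/4) = 1`. -/
def tanhQuarter (x : EReal) : ℝ :=
  if x = ⊤ then 1 else Real.tanh (x.toReal / 4)
open Classical in
/-- The pseudo-inverse square root `A^{-1/2}` of a Hermitian matrix: apply `x ↦ x^{-1/2}` to the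
nonzero eigenvalues and `0` to the eigenvalue `0` (junk value `0` if `A` is not Hermitian). -/
def pinvSqrt (A : Matrix n n ℂ) : Matrix n n ℂ :=
  if h : A.IsHermitian then
    (h.eigenvectorUnitary : Matrix n n ℂ) *
      diagonal (fun i =>
        ((if h.eigenvalues i = 0 then 0 else (h.eigenvalues i) ^ (-(1 : ℝ) / 2) : ℝ) : ℂ)) *
      star (h.eigenvectorUnitary : Matrix n n ℂ)
  else 0

/-- The operator norm `‖A‖_∞` of a matrix, acting on the Euclidean space. -/
def opNorm (A : Matrix n n ℂ) : ℝ :=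
  ‖LinearMap.toContinuousLinearMap (Matrix.toEuclideanLin A)‖

/-! With `Q = B^{-1/2}`, `S = B^{1/2}` and `P = SQ = QBQ`, the projection onto the range of `B`
(all three in the functional calculus of `B`), conjugation by `Q` turns `A ≤ λB` into
`QAQ ≤ λP ≤ λ`, i.e. `‖QAQ‖ ≤ λ`; conversely conjugating `QAQ ≤ λ` by `S` gives `PAP ≤ λB`, and
`PAP = A` as soon as `range A ⊆ range B`. If `range A ⊄ range B` no `λ` exists, since `A ≤ λB`
forces `ker B ⊆ ker A`. The infimum reduces to the supremum through `λB ≤ A ↔ B ≤ λ⁻¹A` for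
`λ > 0`, and `h_{S₊}` is read off from the two suprema. -/

open scoped MatrixOrder Matrix.Norms.L2Operator
open LinearMap

section OrderedModule

variable {M : Type*} [AddCommGroup M] [PartialOrder M] [IsOrderedAddMonoid M] [Module ℝ M]
  [PosSMulMono ℝ M]

lemma nonneg_of_nonneg_smul {b : M} (hb : 0 ≤ b) (hb0 : b ≠ 0) {l : ℝ} (h : 0 ≤ l • b) :
    0 ≤ l := by
  by_contra! hl
  exact hb0 ((smul_eq_zero.mp ((smul_nonpos_of_nonpos_of_nonneg hl.le hb).antisymm h)).resolve_left
    hl.ne)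

lemma smul_le_of_nonpos {a b : M} (ha : 0 ≤ a) (hb : 0 ≤ b) {l : ℝ} (hl : l ≤ 0) : l • b ≤ a :=
  (smul_nonpos_of_nonpos_of_nonneg hl hb).trans ha

end OrderedModule

variable {A B C D : Matrix n n ℂ}

namespace Matrix

-- No continuity hypotheses: every function is continuous on the finite spectrum of a matrix.
lemma cfc_mul_cfc (f g : ℝ → ℝ) (B : Matrix n n ℂ) :
    cfc f B * cfc g B = cfc (fun x => f x * g x) B :=
  (cfc_mul f g B (B.finite_real_spectrum.continuousOn f)
    (B.finite_real_spectrum.continuousOn g)).symm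

lemma cfc_congr_of_nonneg (hB : 0 ≤ B) {f g : ℝ → ℝ} (hfg : ∀ x, 0 ≤ x → f x = g x) :
    cfc f B = cfc g B :=
  cfc_congr fun x hx => hfg x (spectrum_nonneg_of_nonneg hB hx)

def rangeProj (B : Matrix n n ℂ) : Matrix n n ℂ :=
  cfc (fun x : ℝ => if x = 0 then 0 else 1) B

lemma pinvSqrt_eq_cfc (hB : 0 ≤ B) : pinvSqrt B = cfc (fun x => (√x)⁻¹) B := by
  rw [pinvSqrt, dif_pos hB.posSemidef.1, hB.posSemidef.1.cfc_eq, IsHermitian.cfc,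
    Unitary.conjStarAlgAut_apply]
  congr 3
  ext i : 1
  simp only [Function.comp_apply]
  split_ifs with h
  · simp [h]
  · rw [Real.sqrt_eq_rpow, ← Real.rpow_neg (hB.posSemidef.eigenvalues_nonneg i)]
    norm_num

lemma isSelfAdjoint_pinvSqrt (hB : 0 ≤ B) : IsSelfAdjoint (pinvSqrt B) :=
  pinvSqrt_eq_cfc hB ▸ cfc_predicate _ B

lemma isSelfAdjoint_rangeProj (B : Matrix n n ℂ) : IsSelfAdjoint (rangeProj B) :=
  cfc_predicate _ B

lemma rangeProj_le_one (B : Matrix n n ℂ) : rangeProj B ≤ 1 :=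
  cfc_le_one _ B fun x _ => by split_ifs <;> norm_num

lemma rangeProj_mul_self (hB : 0 ≤ B) : rangeProj B * B = B := by
  nth_rw 2 [← cfc_id' ℝ B]
  rw [rangeProj, cfc_mul_cfc]
  nth_rw 2 [← cfc_id' ℝ B]
  exact cfc_congr_of_nonneg hB fun x _ => by split_ifs <;> simp_all

lemma self_mul_rangeProj (hB : 0 ≤ B) : B * rangeProj B = B := by
  nth_rw 1 [← cfc_id' ℝ B]
  rw [rangeProj, cfc_mul_cfc]
  nth_rw 2 [← cfc_id' ℝ B]
  exact cfc_congr_of_nonneg hB fun x _ => by split_ifs <;> simp_all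

lemma cfc_sqrt_mul_cfc_sqrt (hB : 0 ≤ B) : cfc Real.sqrt B * cfc Real.sqrt B = B := by
  rw [cfc_mul_cfc]
  nth_rw 2 [← cfc_id' ℝ B]
  exact cfc_congr_of_nonneg hB fun x hx => Real.mul_self_sqrt hx

lemma cfc_sqrt_mul_pinvSqrt (hB : 0 ≤ B) : cfc Real.sqrt B * pinvSqrt B = rangeProj B := by
  rw [pinvSqrt_eq_cfc hB, rangeProj, cfc_mul_cfc]
  refine cfc_congr_of_nonneg hB fun x hx => ?_
  split_ifs with h
  · simp [h]
  · exact mul_inv_cancel₀ (Real.sqrt_ne_zero'.mpr (hx.lt_of_ne' h))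

lemma pinvSqrt_mul_cfc_sqrt (hB : 0 ≤ B) : pinvSqrt B * cfc Real.sqrt B = rangeProj B := by
  rw [pinvSqrt_eq_cfc hB, rangeProj, cfc_mul_cfc]
  refine cfc_congr_of_nonneg hB fun x hx => ?_
  split_ifs with h
  · simp [h]
  · exact inv_mul_cancel₀ (Real.sqrt_ne_zero'.mpr (hx.lt_of_ne' h))

lemma pinvSqrt_mul_self_mul_pinvSqrt (hB : 0 ≤ B) :
    pinvSqrt B * B * pinvSqrt B = rangeProj B := by
  rw [pinvSqrt_eq_cfc hB]
  nth_rw 2 [← cfc_id' ℝ B]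
  rw [cfc_mul_cfc, cfc_mul_cfc, rangeProj]
  refine cfc_congr_of_nonneg hB fun x hx => ?_
  split_ifs with h
  · simp [h]
  · have : √x ≠ 0 := Real.sqrt_ne_zero'.mpr (hx.lt_of_ne' h)
    field_simp
    exact (Real.sq_sqrt hx).symm

lemma self_mul_pinvSqrt_mul_pinvSqrt (hB : 0 ≤ B) :
    B * (pinvSqrt B * pinvSqrt B) = rangeProj B := by
  rw [pinvSqrt_eq_cfc hB]
  nth_rw 1 [← cfc_id' ℝ B]
  rw [cfc_mul_cfc, cfc_mul_cfc, rangeProj]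
  refine cfc_congr_of_nonneg hB fun x hx => ?_
  split_ifs with h
  · simp [h]
  · have : √x ≠ 0 := Real.sqrt_ne_zero'.mpr (hx.lt_of_ne' h)
    field_simp
    exact (Real.sq_sqrt hx).symm

lemma norm_pinvSqrt_conj_le_of_le_smul (hA : 0 ≤ A) (hB : 0 ≤ B) {l : ℝ} (hl : 0 ≤ l)
    (h : A ≤ l • B) : ‖pinvSqrt B * A * pinvSqrt B‖ ≤ l := by
  have hQ := isSelfAdjoint_pinvSqrt hB
  rw [CStarAlgebra.norm_le_iff_le_algebraMap _ hl (hQ.conjugate_nonneg hA),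
    Algebra.algebraMap_eq_smul_one]
  calc pinvSqrt B * A * pinvSqrt B ≤ pinvSqrt B * (l • B) * pinvSqrt B := hQ.conjugate_le_conjugate h
    _ = l • rangeProj B := by
      rw [mul_smul_comm, smul_mul_assoc, pinvSqrt_mul_self_mul_pinvSqrt hB]
    _ ≤ l • 1 := smul_le_smul_of_nonneg_left (rangeProj_le_one B) hl

lemma le_smul_of_norm_pinvSqrt_conj_le (hA : 0 ≤ A) (hB : 0 ≤ B) (hPA : rangeProj B * A = A)
    {l : ℝ} (h : ‖pinvSqrt B * A * pinvSqrt B‖ ≤ l) : A ≤ l • B := by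
  have hQ := isSelfAdjoint_pinvSqrt hB
  have hS : IsSelfAdjoint (cfc Real.sqrt B) := cfc_predicate _ B
  have hAP : A * rangeProj B = A := by
    simpa [(IsSelfAdjoint.of_nonneg hA).star_eq, (isSelfAdjoint_rangeProj B).star_eq]
      using congrArg star hPA
  have hconj := (CStarAlgebra.norm_le_iff_le_algebraMap _ ((norm_nonneg _).trans h)
    (hQ.conjugate_nonneg hA)).mp h
  rw [Algebra.algebraMap_eq_smul_one] at hconj
  calc A = rangeProj B * A * rangeProj B := by rw [hPA, hAP]
    _ = cfc Real.sqrt B * pinvSqrt B * A * (pinvSqrt B * cfc Real.sqrt B) := by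
      rw [cfc_sqrt_mul_pinvSqrt hB, pinvSqrt_mul_cfc_sqrt hB]
    _ = cfc Real.sqrt B * (pinvSqrt B * A * pinvSqrt B) * cfc Real.sqrt B := by
      simp only [mul_assoc]
    _ ≤ cfc Real.sqrt B * (l • 1) * cfc Real.sqrt B := hS.conjugate_le_conjugate hconj
    _ = l • B := by rw [mul_smul_comm, mul_one, smul_mul_assoc, cfc_sqrt_mul_cfc_sqrt hB]

lemma range_le_iff_rangeProj_mul (hB : 0 ≤ B) :
    range A.mulVecLin ≤ range B.mulVecLin ↔ rangeProj B * A = A := by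
  constructor
  · intro h
    refine ext_iff_mulVec.mpr fun x => ?_
    obtain ⟨y, hy⟩ := h ⟨x, rfl⟩
    simp only [mulVecLin_apply] at hy
    rw [← mulVec_mulVec, ← hy, mulVec_mulVec, rangeProj_mul_self hB]
  · rintro h _ ⟨x, rfl⟩
    refine ⟨(pinvSqrt B * pinvSqrt B * A) *ᵥ x, ?_⟩
    simp only [mulVecLin_apply, mulVec_mulVec, ← mul_assoc]
    rw [mul_assoc B, self_mul_pinvSqrt_mul_pinvSqrt hB, h]

omit [DecidableEq n] in
lemma ker_le_ker_of_le (hC : 0 ≤ C) (h : C ≤ D) : ker D.mulVecLin ≤ ker C.mulVecLin := by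
  intro x hx
  simp only [mem_ker, mulVecLin_apply] at hx ⊢
  rw [← hC.posSemidef.dotProduct_mulVec_zero_iff]
  have hDC := (le_iff.mp h).dotProduct_mulVec_nonneg x
  rw [sub_mulVec, hx, zero_sub, dotProduct_neg, neg_nonneg] at hDC
  exact hDC.antisymm (hC.posSemidef.dotProduct_mulVec_nonneg x)

lemma range_le_range_of_ker_le (hA : IsSelfAdjoint A) (hB : 0 ≤ B)
    (h : ker B.mulVecLin ≤ ker A.mulVecLin) : range A.mulVecLin ≤ range B.mulVecLin := by
  have hAP : A * rangeProj B = A := by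
    have : A * (1 - rangeProj B) = 0 := ext_iff_mulVec.mpr fun x => by
      rw [← mulVec_mulVec, zero_mulVec]
      refine h ?_
      simp only [mem_ker, mulVecLin_apply, mulVec_mulVec, mul_sub, mul_one,
        self_mul_rangeProj hB, sub_self, zero_mulVec]
    rwa [mul_sub, mul_one, sub_eq_zero, eq_comm] at this
  rw [range_le_iff_rangeProj_mul hB]
  simpa [hA.star_eq, (isSelfAdjoint_rangeProj B).star_eq] using congrArg star hAP

lemma range_le_range_of_le_smul (hA : 0 ≤ A) (hB : 0 ≤ B) {l : ℝ} (h : A ≤ l • B) :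
    range A.mulVecLin ≤ range B.mulVecLin := by
  refine range_le_range_of_ker_le (.of_nonneg hA) hB (le_trans ?_ (ker_le_ker_of_le hA h))
  intro x hx
  simp_all

end Matrix

lemma le_smul_iff_norm_pinvSqrt_conj_le (hA : 0 ≤ A) (hB : 0 ≤ B) (hB0 : B ≠ 0)
    (hr : range A.mulVecLin ≤ range B.mulVecLin) (l : ℝ) :
    A ≤ l • B ↔ ‖pinvSqrt B * A * pinvSqrt B‖ ≤ l :=
  ⟨fun h => norm_pinvSqrt_conj_le_of_le_smul hA hB (nonneg_of_nonneg_smul hB hB0 (hA.trans h)) h,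
    le_smul_of_norm_pinvSqrt_conj_le hA hB ((range_le_iff_rangeProj_mul hB).mp hr)⟩

lemma msupRatio_eq_norm (hA : 0 ≤ A) (hB : 0 ≤ B) (hB0 : B ≠ 0)
    (hr : range A.mulVecLin ≤ range B.mulVecLin) :
    msupRatio A B = ‖pinvSqrt B * A * pinvSqrt B‖ := by
  have hset : {l : ℝ | (l • B - A).PosSemidef} = Set.Ici ‖pinvSqrt B * A * pinvSqrt B‖ :=
    Set.ext (le_smul_iff_norm_pinvSqrt_conj_le hA hB hB0 hr)
  rw [msupRatio, hset]
  exact (EReal.coe_strictMono.monotone.map_isLeast isLeast_Ici).isGLB.sInf_eq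

lemma msupRatio_eq_top (hA : 0 ≤ A) (hB : 0 ≤ B)
    (hr : ¬ range A.mulVecLin ≤ range B.mulVecLin) : msupRatio A B = ⊤ := by
  have hset : {l : ℝ | (l • B - A).PosSemidef} = ∅ :=
    Set.eq_empty_of_forall_notMem fun l h => hr (range_le_range_of_le_smul hA hB (le_iff.mpr h))
  rw [msupRatio, hset, Set.image_empty, sInf_empty]

lemma minfRatio_eq_inv_norm (hA : 0 ≤ A) (hB : 0 ≤ B) (hB0 : B ≠ 0)
    (hr : range B.mulVecLin ≤ range A.mulVecLin) :
    minfRatio A B = (‖pinvSqrt A * B * pinvSqrt A‖⁻¹ : ℝ) := by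
  set c := ‖pinvSqrt A * B * pinvSqrt A‖
  have hPB := (range_le_iff_rangeProj_mul hA).mp hr
  have hc : 0 < c := by
    by_contra! hc
    exact hB0 (le_antisymm (by simpa using le_smul_of_norm_pinvSqrt_conj_le hB hA hPB hc) hB)
  have hset : {l : ℝ | (A - l • B).PosSemidef} = Set.Iic c⁻¹ := by
    ext l
    change l • B ≤ A ↔ l ≤ c⁻¹
    rcases le_or_gt l 0 with hl | hl
    · exact iff_of_true (smul_le_of_nonpos hA hB hl) (hl.trans (inv_nonneg.mpr hc.le))
    · rw [← le_inv_smul_iff_of_pos hl, ← le_inv_comm₀ hc hl]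
      exact ⟨norm_pinvSqrt_conj_le_of_le_smul hB hA (inv_nonneg.mpr hl.le),
        le_smul_of_norm_pinvSqrt_conj_le hB hA hPB⟩
  rw [minfRatio, hset]
  exact (EReal.coe_strictMono.monotone.map_isGreatest isGreatest_Iic).isLUB.sSup_eq

lemma minfRatio_eq_zero (hA : 0 ≤ A) (hB : 0 ≤ B)
    (hr : ¬ range B.mulVecLin ≤ range A.mulVecLin) : minfRatio A B = 0 := by
  have hset : {l : ℝ | (A - l • B).PosSemidef} = Set.Iic 0 := by
    ext l
    refine ⟨fun h => ?_, smul_le_of_nonpos hA hB⟩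
    by_contra! hl
    rw [Set.mem_Iic, not_le] at hl
    exact hr (range_le_range_of_le_smul hB hA ((le_inv_smul_iff_of_pos hl).mpr (le_iff.mpr h)))
  rw [minfRatio, hset]
  exact_mod_cast (EReal.coe_strictMono.monotone.map_isGreatest isGreatest_Iic).isLUB.sSup_eq

lemma mHilbert_eq_log (hA : 0 ≤ A) (hB : 0 ≤ B) (hA0 : A ≠ 0) (hB0 : B ≠ 0)
    (hr : range A.mulVecLin = range B.mulVecLin) :
    mHilbert A B = Real.log (‖pinvSqrt A * B * pinvSqrt A‖ * ‖pinvSqrt B * A * pinvSqrt B‖) := by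
  rw [mHilbert, msupRatio_eq_norm hA hB hB0 hr.le, msupRatio_eq_norm hB hA hA0 hr.ge,
    if_neg (by simp), EReal.toReal_coe, EReal.toReal_coe, mul_comm]

lemma mHilbert_eq_top (hA : 0 ≤ A) (hB : 0 ≤ B)
    (hr : range A.mulVecLin ≠ range B.mulVecLin) : mHilbert A B = ⊤ := by
  rw [mHilbert, if_pos]
  by_cases hAB : range A.mulVecLin ≤ range B.mulVecLin
  · exact .inr (msupRatio_eq_top hB hA fun hBA => hr (hAB.antisymm hBA))
  · exact .inl (msupRatio_eq_top hA hB hAB)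

/-- **Hilbert distance w.r.t. the positive semidefinite cone.** -/
theorem msupRatio_minfRatio_mHilbert_eq
    {d : ℕ} (A B : Matrix (Fin d) (Fin d) ℂ)
    (hA : A.PosSemidef) (hB : B.PosSemidef) (hA0 : A ≠ 0) (hB0 : B ≠ 0) :
    ((LinearMap.range A.mulVecLin ≤ LinearMap.range B.mulVecLin →
        msupRatio A B = ((opNorm (pinvSqrt B * A * pinvSqrt B) : ℝ) : EReal)) ∧
      (¬ LinearMap.range A.mulVecLin ≤ LinearMap.range B.mulVecLin →
        msupRatio A B = ⊤)) ∧
    ((LinearMap.range B.mulVecLin ≤ LinearMap.range A.mulVecLin →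
        minfRatio A B = (((opNorm (pinvSqrt A * B * pinvSqrt A))⁻¹ : ℝ) : EReal)) ∧
      (¬ LinearMap.range B.mulVecLin ≤ LinearMap.range A.mulVecLin →
        minfRatio A B = 0)) ∧
    ((LinearMap.range A.mulVecLin = LinearMap.range B.mulVecLin →
        mHilbert A B = ((Real.log
          (opNorm (pinvSqrt A * B * pinvSqrt A) * opNorm (pinvSqrt B * A * pinvSqrt B)) : ℝ) : EReal)) ∧
      (LinearMap.range A.mulVecLin ≠ LinearMap.range B.mulVecLin →
        mHilbert A B = ⊤)) :=
  ⟨⟨msupRatio_eq_norm hA.nonneg hB.nonneg hB0, msupRatio_eq_top hA.nonneg hB.nonneg⟩,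
    ⟨minfRatio_eq_inv_norm hA.nonneg hB.nonneg hB0, minfRatio_eq_zero hA.nonneg hB.nonneg⟩,
    ⟨mHilbert_eq_log hA.nonneg hB.nonneg hA0 hB0, mHilbert_eq_top hA.nonneg hB.nonneg⟩⟩

end
end

section
/- For i = 1,2 let A_i, B_i be nonzero positive semidefinite d_i×d_i complex matrices. Then, with h computed with respect to the positive semidefinite cones in the respective matrix sizes and addition in [0,∞], h_{S₊}(A₁⊗A₂, B₁⊗B₂) = h_{S₊}(A₁,B₁) + h_{S₊}(A₂,B₂), where ⊗ denotes the Kronecker (tensor) product. -/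
/-!
The set `{λ | A ≤ λ B}` is closed and upward closed, so for `A ≠ 0` it is either empty or a ray
`[r, ∞)` with `r = sup(A/B) > 0`. For the Kronecker product the rays multiply:
`λ₁ λ₂ B₁ ⊗ B₂ - A₁ ⊗ A₂ = (λ₁ B₁ - A₁) ⊗ λ₂ B₂ + A₁ ⊗ (λ₂ B₂ - A₂) ≥ 0`, and conversely, if
`cᵢ` lies below the `i`-th ray, product vectors `x ⊗ y`, on which quadratic forms factor, witness
that `c₁ c₂` lies below the ray of the product. Hence `sup` is multiplicative in `(0, ∞]` and the
logarithm turns the product into a sum.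
-/

open scoped ComplexOrder
open Matrix

noncomputable section

variable {n : Type*} [Fintype n] [DecidableEq n]

theorem IsUpperSet.eq_empty_or_eq_Ici_of_isClosed {α : Type*}
    [ConditionallyCompleteLinearOrder α] [TopologicalSpace α] [OrderTopology α] {s : Set α}
    (hu : IsUpperSet s) (hc : IsClosed s) (hb : BddBelow s) : s = ∅ ∨ ∃ r, s = Set.Ici r := by
  rcases s.eq_empty_or_nonempty with h | hne
  · exact .inl h
  · exact .inr ⟨sInf s, Set.Subset.antisymm (fun _ hx => csInf_le hb hx)
      (hu.Ici_subset (hc.csInf_mem hne hb))⟩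

namespace Matrix

open scoped Kronecker

theorem dotProduct_kronecker_mulVec {R : Type*} [CommSemiring R] {ι κ : Type*} [Fintype ι]
    [Fintype κ] (u x : ι → R) (v y : κ → R) (A : Matrix ι ι R) (B : Matrix κ κ R) :
    (fun p : ι × κ => u p.1 * v p.2) ⬝ᵥ (A ⊗ₖ B) *ᵥ (fun p => x p.1 * y p.2) =
      (u ⬝ᵥ A *ᵥ x) * (v ⬝ᵥ B *ᵥ y) := by
  simp only [dotProduct, mulVec]
  rw [Finset.sum_mul_sum, Fintype.sum_prod_type]
  refine Finset.sum_congr rfl fun i _ => Finset.sum_congr rfl fun j _ => ?_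
  simp only [Fintype.sum_prod_type, kroneckerMap_apply, Finset.mul_sum, Finset.sum_mul]
  rw [Finset.sum_comm]
  exact Finset.sum_congr rfl fun k _ => Finset.sum_congr rfl fun l _ => by ring

variable {𝕜 : Type*} [RCLike 𝕜] {ι κ : Type*}

theorem IsHermitian.kronecker {A : Matrix ι ι 𝕜} {B : Matrix κ κ 𝕜} (hA : A.IsHermitian)
    (hB : B.IsHermitian) : (A ⊗ₖ B).IsHermitian := by
  rw [IsHermitian, conjTranspose_kronecker, hA.eq, hB.eq]

def ratioSet (A B : Matrix ι ι 𝕜) : Set ℝ :=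
  {l | (l • B - A).PosSemidef}

variable {A B : Matrix ι ι 𝕜} {A₁ B₁ : Matrix ι ι 𝕜} {A₂ B₂ : Matrix κ κ 𝕜} {l : ℝ}

theorem isUpperSet_ratioSet (hB : B.PosSemidef) : IsUpperSet (ratioSet A B) := by
  intro l l' hll' hl
  have : l' • B - A = (l • B - A) + (l' - l) • B := by module
  simpa only [ratioSet, Set.mem_ofPred_eq, this] using hl.add (hB.smul (sub_nonneg.mpr hll'))

theorem zero_notMem_ratioSet (hA : A.PosSemidef) (hA0 : A ≠ 0) : 0 ∉ ratioSet A B := by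
  open MatrixOrder in
  intro h
  refine hA0 (le_antisymm (le_iff.mpr ?_) hA.nonneg)
  simpa only [ratioSet, Set.mem_ofPred_eq, zero_smul] using h

theorem mul_mem_ratioSet_kronecker [Finite ι] [Finite κ] (hA₁ : A₁.PosSemidef)
    (hB₂ : B₂.PosSemidef) {l₁ l₂ : ℝ} (h₁ : l₁ ∈ ratioSet A₁ B₁) (h₂ : l₂ ∈ ratioSet A₂ B₂)
    (hl₂ : 0 ≤ l₂) : l₁ * l₂ ∈ ratioSet (A₁ ⊗ₖ A₂) (B₁ ⊗ₖ B₂) := by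
  have key : (l₁ * l₂) • (B₁ ⊗ₖ B₂) - A₁ ⊗ₖ A₂
      = (l₁ • B₁ - A₁) ⊗ₖ (l₂ • B₂) + A₁ ⊗ₖ (l₂ • B₂ - A₂) := by
    ext ⟨i, j⟩ ⟨k, l⟩
    simp only [sub_apply, add_apply, smul_apply, kroneckerMap_apply, RCLike.real_smul_eq_coe_mul,
      RCLike.ofReal_mul]
    ring
  simp only [ratioSet, Set.mem_ofPred_eq, key] at h₁ h₂ ⊢
  exact (h₁.kronecker (hB₂.smul hl₂)).add (hA₁.kronecker h₂)

variable [Fintype ι] [Fintype κ]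

theorem IsHermitian.re_star_dotProduct_kronecker_mulVec {A : Matrix ι ι 𝕜} (hA : A.IsHermitian)
    (B : Matrix κ κ 𝕜) (x : ι → 𝕜) (y : κ → 𝕜) :
    RCLike.re (star (fun p : ι × κ => x p.1 * y p.2) ⬝ᵥ (A ⊗ₖ B) *ᵥ (fun p => x p.1 * y p.2)) =
      RCLike.re (star x ⬝ᵥ A *ᵥ x) * RCLike.re (star y ⬝ᵥ B *ᵥ y) := by
  have hstar : star (fun p : ι × κ => x p.1 * y p.2) = fun p => star x p.1 * star y p.2 :=
    funext fun p => star_mul' (x p.1) (y p.2)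
  rw [hstar, dotProduct_kronecker_mulVec, RCLike.mul_re, hA.im_star_dotProduct_mulVec_self,
    zero_mul, sub_zero]

theorem mem_ratioSet_iff (hA : A.IsHermitian) (hB : B.IsHermitian) :
    l ∈ ratioSet A B ↔
      ∀ x, RCLike.re (star x ⬝ᵥ A *ᵥ x) ≤ l * RCLike.re (star x ⬝ᵥ B *ᵥ x) := by
  have hherm : (l • B - A).IsHermitian := (hB.smul (IsSelfAdjoint.all l)).sub hA
  refine (posSemidef_iff_dotProduct_mulVec.trans (and_iff_right hherm)).trans
    (forall_congr' fun x => ?_)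
  rw [RCLike.nonneg_iff, and_iff_left (hherm.im_star_dotProduct_mulVec_self x), sub_mulVec,
    smul_mulVec, dotProduct_sub, dotProduct_smul, map_sub, RCLike.smul_re, sub_nonneg]

theorem isClosed_ratioSet (hA : A.IsHermitian) (hB : B.IsHermitian) :
    IsClosed (ratioSet A B) := by
  have : ratioSet A B =
      ⋂ x, {l : ℝ | RCLike.re (star x ⬝ᵥ A *ᵥ x) ≤ l * RCLike.re (star x ⬝ᵥ B *ᵥ x)} := by
    ext l
    simp only [mem_ratioSet_iff hA hB, Set.mem_iInter, Set.mem_ofPred_eq]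
  rw [this]
  exact isClosed_iInter fun x => isClosed_le continuous_const (by fun_prop)

theorem ratioSet_eq_empty_or_eq_Ici (hA : A.PosSemidef) (hB : B.PosSemidef) (hA0 : A ≠ 0) :
    ratioSet A B = ∅ ∨ ∃ r > 0, ratioSet A B = Set.Ici r := by
  have hpos : ∀ l ∈ ratioSet A B, 0 < l := fun l hl =>
    lt_of_not_ge fun hl0 => zero_notMem_ratioSet hA hA0 (isUpperSet_ratioSet hB hl0 hl)
  refine (isUpperSet_ratioSet hB).eq_empty_or_eq_Ici_of_isClosed
    (isClosed_ratioSet hA.isHermitian hB.isHermitian) ⟨0, fun l hl => (hpos l hl).le⟩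
    |>.imp_right fun ⟨r, hr⟩ => ⟨r, hpos r (hr ▸ Set.mem_Ici.2 le_rfl), hr⟩

theorem exists_pos_notMem_ratioSet (hA : A.PosSemidef) (hB : B.PosSemidef) (hA0 : A ≠ 0) :
    ∃ c > 0, c ∉ ratioSet A B := by
  rcases ratioSet_eq_empty_or_eq_Ici hA hB hA0 with h | ⟨r, hr, h⟩
  · exact ⟨1, one_pos, h ▸ Set.notMem_empty 1⟩
  · exact ⟨r / 2, half_pos hr, by rw [h, Set.mem_Ici]; linarith⟩

theorem mul_lt_of_mem_ratioSet_kronecker (hA₁ : A₁.IsHermitian) (hB₁ : B₁.PosSemidef)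
    (hA₂ : A₂.IsHermitian) (hB₂ : B₂.PosSemidef) (hl : l ∈ ratioSet (A₁ ⊗ₖ A₂) (B₁ ⊗ₖ B₂))
    ⦃c₁ c₂ : ℝ⦄ (h₁ : c₁ ∉ ratioSet A₁ B₁) (h₂ : c₂ ∉ ratioSet A₂ B₂) (hc₁ : 0 ≤ c₁)
    (hc₂ : 0 ≤ c₂) : c₁ * c₂ < l := by
  simp only [mem_ratioSet_iff hA₁ hB₁.isHermitian, mem_ratioSet_iff hA₂ hB₂.isHermitian,
    not_forall, not_le] at h₁ h₂
  obtain ⟨x, hx⟩ := h₁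
  obtain ⟨y, hy⟩ := h₂
  have hxy := (mem_ratioSet_iff (hA₁.kronecker hA₂)
    (hB₁.isHermitian.kronecker hB₂.isHermitian)).mp hl (fun p => x p.1 * y p.2)
  rw [hA₁.re_star_dotProduct_kronecker_mulVec,
    hB₁.isHermitian.re_star_dotProduct_kronecker_mulVec] at hxy
  have hbx := mul_nonneg hc₁ (hB₁.re_dotProduct_nonneg x)
  have hby := mul_nonneg hc₂ (hB₂.re_dotProduct_nonneg y)
  refine lt_of_mul_lt_mul_right ?_ (mul_nonneg (hB₁.re_dotProduct_nonneg x)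
    (hB₂.re_dotProduct_nonneg y))
  calc c₁ * c₂ * _ = _ := by ring
    _ < _ := mul_lt_mul'' hx hy hbx hby
    _ ≤ _ := hxy

theorem ratioSet_kronecker_eq_empty (hA₁ : A₁.PosSemidef) (hB₁ : B₁.PosSemidef)
    (hA₂ : A₂.PosSemidef) (hB₂ : B₂.PosSemidef) (hA₁0 : A₁ ≠ 0) (hA₂0 : A₂ ≠ 0)
    (h : ratioSet A₁ B₁ = ∅ ∨ ratioSet A₂ B₂ = ∅) : ratioSet (A₁ ⊗ₖ A₂) (B₁ ⊗ₖ B₂) = ∅ := by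
  obtain ⟨c₁, hc₁, h₁⟩ := exists_pos_notMem_ratioSet hA₁ hB₁ hA₁0
  obtain ⟨c₂, hc₂, h₂⟩ := exists_pos_notMem_ratioSet hA₂ hB₂ hA₂0
  refine Set.eq_empty_iff_forall_notMem.2 fun l hl => ?_
  have hlt := mul_lt_of_mem_ratioSet_kronecker hA₁.isHermitian hB₁ hA₂.isHermitian hB₂ hl
  rcases h with h | h
  · have := hlt (c₁ := |l| / c₂) (h ▸ Set.notMem_empty _) h₂ (by positivity) hc₂.le
    rw [div_mul_cancel₀ _ hc₂.ne'] at this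
    exact (le_abs_self l).not_gt this
  · have := hlt (c₂ := |l| / c₁) h₁ (h ▸ Set.notMem_empty _) hc₁.le (by positivity)
    rw [mul_div_cancel₀ _ hc₁.ne'] at this
    exact (le_abs_self l).not_gt this

theorem ratioSet_kronecker_eq_Ici (hA₁ : A₁.PosSemidef) (hB₁ : B₁.PosSemidef)
    (hA₂ : A₂.IsHermitian) (hB₂ : B₂.PosSemidef) {r₁ r₂ : ℝ} (hr₁ : 0 < r₁) (hr₂ : 0 < r₂)
    (h₁ : ratioSet A₁ B₁ = Set.Ici r₁) (h₂ : ratioSet A₂ B₂ = Set.Ici r₂) :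
    ratioSet (A₁ ⊗ₖ A₂) (B₁ ⊗ₖ B₂) = Set.Ici (r₁ * r₂) := by
  have hnot₁ : ∀ c < r₁, c ∉ ratioSet A₁ B₁ := fun c hc => by rwa [h₁, Set.mem_Ici, not_le]
  have hnot₂ : ∀ c < r₂, c ∉ ratioSet A₂ B₂ := fun c hc => by rwa [h₂, Set.mem_Ici, not_le]
  refine Set.Subset.antisymm (fun l hl => Set.mem_Ici.2 ?_)
    ((isUpperSet_ratioSet (hB₁.kronecker hB₂)).Ici_subset (mul_mem_ratioSet_kronecker hA₁ hB₂
      (h₁ ▸ Set.mem_Ici.2 le_rfl) (h₂ ▸ Set.mem_Ici.2 le_rfl) hr₂.le))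
  have hlt := mul_lt_of_mem_ratioSet_kronecker hA₁.isHermitian hB₁ hA₂ hB₂ hl
  have hl0 : 0 < l := by simpa using hlt (hnot₁ 0 hr₁) (hnot₂ 0 hr₂) le_rfl le_rfl
  by_contra! hl : l < r₁ * r₂
  -- write `l = c₁ * (l / c₁)` with `c₁ < r₁` and `l / c₁ < r₂`
  obtain ⟨c₁, hc₁l, hc₁r⟩ := exists_between ((div_lt_iff₀ hr₂).2 hl)
  have hc₁ : 0 < c₁ := (div_pos hl0 hr₂).trans hc₁l
  have := hlt (hnot₁ c₁ hc₁r) (hnot₂ (l / c₁) ((div_lt_iff₀' hc₁).2 ((div_lt_iff₀ hr₂).1 hc₁l)))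
    hc₁.le (div_pos hl0 hc₁).le
  rw [mul_div_cancel₀ _ hc₁.ne'] at this
  exact this.false

end Matrix

section HilbertMetric

open Kronecker

variable {ι κ : Type*} {A B : Matrix ι ι ℂ}

theorem msupRatio_eq_top_of_ratioSet_eq_empty (h : ratioSet A B = ∅) : msupRatio A B = ⊤ := by
  change sInf (_ '' ratioSet A B) = ⊤
  rw [h, Set.image_empty, sInf_empty]

theorem msupRatio_eq_of_ratioSet_eq_Ici {r : ℝ} (h : ratioSet A B = Set.Ici r) :
    msupRatio A B = r := by
  change sInf (_ '' ratioSet A B) = _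
  rw [h]
  exact (EReal.coe_strictMono.monotone.map_isLeast isLeast_Ici).isGLB.sInf_eq

theorem msupRatio_pos [Fintype ι] (hA : A.PosSemidef) (hB : B.PosSemidef) (hA0 : A ≠ 0) :
    0 < msupRatio A B := by
  rcases ratioSet_eq_empty_or_eq_Ici hA hB hA0 with h | ⟨r, hr, h⟩
  · rw [msupRatio_eq_top_of_ratioSet_eq_empty h]
    exact EReal.zero_lt_top
  · rw [msupRatio_eq_of_ratioSet_eq_Ici h]
    exact EReal.coe_pos.2 hr

theorem msupRatio_kronecker [Fintype ι] [Fintype κ] {A₁ B₁ : Matrix ι ι ℂ}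
    {A₂ B₂ : Matrix κ κ ℂ} (hA₁ : A₁.PosSemidef) (hB₁ : B₁.PosSemidef) (hA₂ : A₂.PosSemidef)
    (hB₂ : B₂.PosSemidef) (hA₁0 : A₁ ≠ 0) (hA₂0 : A₂ ≠ 0) :
    msupRatio (A₁ ⊗ₖ A₂) (B₁ ⊗ₖ B₂) = msupRatio A₁ B₁ * msupRatio A₂ B₂ := by
  rcases ratioSet_eq_empty_or_eq_Ici hA₁ hB₁ hA₁0 with h₁ | ⟨r₁, hr₁, h₁⟩
  · rw [msupRatio_eq_top_of_ratioSet_eq_empty h₁,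
      EReal.top_mul_of_pos (msupRatio_pos hA₂ hB₂ hA₂0), msupRatio_eq_top_of_ratioSet_eq_empty
        (ratioSet_kronecker_eq_empty hA₁ hB₁ hA₂ hB₂ hA₁0 hA₂0 (.inl h₁))]
  rcases ratioSet_eq_empty_or_eq_Ici hA₂ hB₂ hA₂0 with h₂ | ⟨r₂, hr₂, h₂⟩
  · rw [msupRatio_eq_top_of_ratioSet_eq_empty h₂,
      EReal.mul_top_of_pos (msupRatio_pos hA₁ hB₁ hA₁0), msupRatio_eq_top_of_ratioSet_eq_empty
        (ratioSet_kronecker_eq_empty hA₁ hB₁ hA₂ hB₂ hA₁0 hA₂0 (.inr h₂))]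
  rw [msupRatio_eq_of_ratioSet_eq_Ici h₁, msupRatio_eq_of_ratioSet_eq_Ici h₂,
    msupRatio_eq_of_ratioSet_eq_Ici
      (ratioSet_kronecker_eq_Ici hA₁ hB₁ hA₂.isHermitian hB₂ hr₁ hr₂ h₁ h₂), EReal.coe_mul]

end HilbertMetric

def hilbertOfSupRatios (p q : EReal) : EReal :=
  if p = ⊤ ∨ q = ⊤ then ⊤ else ((Real.log (p.toReal * q.toReal) : ℝ) : EReal)

theorem mHilbert_eq_hilbertOfSupRatios {ι : Type*} (A B : Matrix ι ι ℂ) :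
    mHilbert A B = hilbertOfSupRatios (msupRatio A B) (msupRatio B A) := rfl

theorem hilbertOfSupRatios_ne_bot (p q : EReal) : hilbertOfSupRatios p q ≠ ⊥ := by
  unfold hilbertOfSupRatios
  split_ifs <;> simp

theorem hilbertOfSupRatios_mul {p₁ p₂ q₁ q₂ : EReal} (hp₁ : 0 < p₁) (hp₂ : 0 < p₂) (hq₁ : 0 < q₁)
    (hq₂ : 0 < q₂) :
    hilbertOfSupRatios (p₁ * p₂) (q₁ * q₂) =
      hilbertOfSupRatios p₁ q₁ + hilbertOfSupRatios p₂ q₂ := by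
  by_cases htop : p₁ = ⊤ ∨ q₁ = ⊤ ∨ p₂ = ⊤ ∨ q₂ = ⊤
  · have hL : p₁ * p₂ = ⊤ ∨ q₁ * q₂ = ⊤ := by
      rcases htop with h | h | h | h <;>
        simp [EReal.top_mul_of_pos, EReal.mul_top_of_pos, *]
    have hR : hilbertOfSupRatios p₁ q₁ = ⊤ ∨ hilbertOfSupRatios p₂ q₂ = ⊤ := by
      rcases htop with h | h | h | h <;> simp [hilbertOfSupRatios, h]
    rw [hilbertOfSupRatios, if_pos hL]
    rcases hR with h | h
    · rw [h, EReal.top_add_of_ne_bot (hilbertOfSupRatios_ne_bot _ _)]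
    · rw [h, EReal.add_top_of_ne_bot (hilbertOfSupRatios_ne_bot _ _)]
  · push Not at htop
    obtain ⟨hp₁t, hq₁t, hp₂t, hq₂t⟩ := htop
    lift p₁ to ℝ using ⟨hp₁t, hp₁.ne_bot⟩
    lift p₂ to ℝ using ⟨hp₂t, hp₂.ne_bot⟩
    lift q₁ to ℝ using ⟨hq₁t, hq₁.ne_bot⟩
    lift q₂ to ℝ using ⟨hq₂t, hq₂.ne_bot⟩
    simp only [EReal.coe_pos] at hp₁ hp₂ hq₁ hq₂
    simp only [hilbertOfSupRatios, ← EReal.coe_mul, EReal.coe_ne_top, or_self, if_false,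
      EReal.toReal_coe, ← EReal.coe_add]
    rw [← Real.log_mul (by positivity) (by positivity), mul_mul_mul_comm]

open Kronecker in
/-- **Additivity of Hilbert's projective metric on tensor (Kronecker) products.** -/
theorem mHilbert_kronecker_add
    {d₁ d₂ : ℕ} (A₁ B₁ : Matrix (Fin d₁) (Fin d₁) ℂ) (A₂ B₂ : Matrix (Fin d₂) (Fin d₂) ℂ)
    (hA₁ : A₁.PosSemidef) (hB₁ : B₁.PosSemidef) (hA₂ : A₂.PosSemidef) (hB₂ : B₂.PosSemidef)
    (hA₁0 : A₁ ≠ 0) (hB₁0 : B₁ ≠ 0) (hA₂0 : A₂ ≠ 0) (hB₂0 : B₂ ≠ 0) :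
    mHilbert (A₁ ⊗ₖ A₂) (B₁ ⊗ₖ B₂) = mHilbert A₁ B₁ + mHilbert A₂ B₂ := by
  simp only [mHilbert_eq_hilbertOfSupRatios]
  rw [msupRatio_kronecker hA₁ hB₁ hA₂ hB₂ hA₁0 hA₂0, msupRatio_kronecker hB₁ hA₁ hB₂ hA₂ hB₁0 hB₂0]
  exact hilbertOfSupRatios_mul (msupRatio_pos hA₁ hB₁ hA₁0) (msupRatio_pos hA₂ hB₂ hA₂0)
    (msupRatio_pos hB₁ hA₁ hB₁0) (msupRatio_pos hB₂ hA₂ hB₂0)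

end
end

section
/- Let C ⊆ V be a proper cone and T : V → V a linear map with T(C) ⊆ C such that T(c) = c for some nonzero c ∈ C and Δ(T) < ∞. If λ ∈ ℂ and a is a nonzero element of the complexification V ⊗_ℝ ℂ with (T ⊗ id)(a) = λ·a and a is not a complex scalar multiple of c, then |λ| ≤ tanh(Δ(T)/4). -/
noncomputable section

variable {V : Type*} [NormedAddCommGroup V] [InnerProductSpace ℝ V]

/-- A proper cone: closed, convex, closed under nonnegative scaling, pointed and solid. -/
def IsProperCone (C : Set V) : Prop :=
  IsClosed C ∧ Convex ℝ C ∧ (∀ (r : ℝ), 0 ≤ r → ∀ x ∈ C, r • x ∈ C) ∧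
    (C ∩ (-C) = {0}) ∧ (Submodule.span ℝ C = ⊤)

/-- `sup_C(a/b) := inf {λ : ℝ | λ • b - a ∈ C}`, as an extended real (`⊤` if no such `λ`). -/
def supRatio (C : Set V) (a b : V) : EReal :=
  sInf ((fun l : ℝ => (l : EReal)) '' {l : ℝ | l • b - a ∈ C})

/-- `inf_C(a/b) := sup {λ : ℝ | a - λ • b ∈ C}`. -/
def infRatio (C : Set V) (a b : V) : EReal :=
  sSup ((fun l : ℝ => (l : EReal)) '' {l : ℝ | a - l • b ∈ C})

/-- Hilbert's projective metric `h_C(a,b) = ln (sup_C(a/b) * sup_C(b/a)) ∈ [0,∞]`. -/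
def hilbertDist (C : Set V) (a b : V) : EReal :=
  if supRatio C a b = ⊤ ∨ supRatio C b a = ⊤ then ⊤
  else ((Real.log ((supRatio C a b).toReal * (supRatio C b a).toReal) : ℝ) : EReal)

/-- The oscillation `osc_C(a/b) = sup_C(a/b) - inf_C(a/b)`. -/
def oscRatio (C : Set V) (a b : V) : EReal :=
  supRatio C a b - infRatio C a b

variable {V' : Type*} [NormedAddCommGroup V'] [InnerProductSpace ℝ V']

/-- The projective diameter `Δ(T)` of a cone-preserving linear map `T`. -/
def projDiam (C : Set V) (C' : Set V') (T : V →ₗ[ℝ] V') : EReal :=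
  ⨆ (a : V) (_ : a ∈ C \ {0}) (b : V) (_ : b ∈ C \ {0}), hilbertDist C' (T a) (T b)

/-- `tanh(x/2)`, with the convention `tanh(⊤/2) = 1`. -/
def tanhHalf (x : EReal) : ℝ :=
  if x = ⊤ then 1 else Real.tanh (x.toReal / 2)

/-- The dual cone of `C` (identifying `V` with its dual via the inner product). -/
def dualConeSet (C : Set V) : Set V := {w : V | ∀ c ∈ C, 0 ≤ (inner ℝ w c : ℝ)}

/-- The base norm `‖v‖_B` induced by the cone `C` and the functional `⟨e, ·⟩`. -/
def baseNorm (C : Set V) (e : V) (v : V) : ℝ :=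
  sInf {r : ℝ | ∃ cp ∈ C, ∃ cm ∈ C, v = cp - cm ∧ r = (inner ℝ e cp : ℝ) + (inner ℝ e cm : ℝ)}

/-- The negativity `N_B(v)` induced by the cone `C` and the functional `⟨e, ·⟩`. -/
def negativity (C : Set V) (e : V) (v : V) : ℝ :=
  sInf {r : ℝ | ∃ cp ∈ C, ∃ cm ∈ C, v = cp - cm ∧ r = (inner ℝ e cm : ℝ)}

/-!
Because `T` fixes `c` and `Δ(T) < ∞`, every vector in the range of `T` lies between two multiples
of `c`. On such vectors the oscillation `osc v = inf {M - m | m c ≤ v ≤ M c}` is a seminorm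
vanishing exactly on `ℝ c`, and Birkhoff's contraction argument gives
`osc (T v) ≤ tanh (Δ/4) · osc v`. Writing `λ = |λ| e^{iφ}`, the real vectors
`u θ = Re (e^{iθ} a)` satisfy `T (u (θ - φ)) = |λ| u θ`; as `a` is not a multiple of `c`, the
supremum of `osc (u θ)` is positive, and comparing both sides at this supremum gives
`|λ| ≤ tanh (Δ/4)`.
-/

namespace IsProperCone

variable {C : Set V} {c : V}

theorem smul_mem (hC : IsProperCone C) {r : ℝ} (hr : 0 ≤ r) {x : V} (hx : x ∈ C) : r • x ∈ C :=
  hC.2.2.1 r hr x hx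

theorem add_mem (hC : IsProperCone C) {x y : V} (hx : x ∈ C) (hy : y ∈ C) : x + y ∈ C := by
  have h := hC.smul_mem zero_le_two
    (hC.2.1 hx hy (by norm_num : (0 : ℝ) ≤ 1 / 2) (by norm_num : (0 : ℝ) ≤ 1 / 2) (by norm_num))
  rwa [show (2 : ℝ) • ((1 / 2 : ℝ) • x + (1 / 2 : ℝ) • y) = x + y by module] at h

theorem zero_mem (hC : IsProperCone C) : (0 : V) ∈ C :=
  (hC.2.2.2.1.symm ▸ Set.mem_singleton (0 : V) : (0 : V) ∈ C ∩ -C).1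

theorem eq_zero_of_mem_of_neg_mem (hC : IsProperCone C) {x : V} (hx : x ∈ C) (hx' : -x ∈ C) :
    x = 0 := by
  have : x ∈ C ∩ -C := ⟨hx, Set.mem_neg.2 hx'⟩
  rwa [hC.2.2.2.1] at this

theorem nonneg_of_smul_mem (hC : IsProperCone C) (hc : c ∈ C) (hc0 : c ≠ 0) {t : ℝ}
    (ht : t • c ∈ C) : 0 ≤ t := by
  by_contra! h
  refine smul_ne_zero h.ne hc0 (hC.eq_zero_of_mem_of_neg_mem ht ?_)
  simpa using hC.smul_mem (neg_nonneg.2 h.le) hc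

theorem le_of_sub_smul_mem_of_smul_sub_mem (hC : IsProperCone C) (hc : c ∈ C) (hc0 : c ≠ 0)
    {v : V} {m M : ℝ} (hm : v - m • c ∈ C) (hM : M • c - v ∈ C) : m ≤ M := by
  have h := hC.add_mem hm hM
  rw [show v - m • c + (M • c - v) = (M - m) • c by module] at h
  exact sub_nonneg.1 (hC.nonneg_of_smul_mem hc hc0 h)

theorem exists_supRatio_eq (hC : IsProperCone C) {y z : V} (hy : y ∈ C) (hz : z ∈ C)
    (hy0 : y ≠ 0) (hz0 : z ≠ 0) (h : supRatio C y z ≠ ⊤) :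
    ∃ β : ℝ, 0 < β ∧ β • z - y ∈ C ∧ supRatio C y z = β := by
  have hpos : ∀ l : ℝ, l • z - y ∈ C → 0 < l := by
    intro l hl
    have hl0 : 0 ≤ l := hC.nonneg_of_smul_mem hz hz0 (by simpa using hC.add_mem hl hy)
    refine hl0.lt_of_ne fun hl0 => hy0 (hC.eq_zero_of_mem_of_neg_mem hy ?_)
    simpa [← hl0] using hl
  set S := {l : ℝ | l • z - y ∈ C} with hS
  have hne : S.Nonempty := by
    by_contra hSe
    refine h ?_
    rw [supRatio, ← hS, Set.not_nonempty_iff_eq_empty.1 hSe, Set.image_empty, sInf_empty]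
  have hbdd : BddBelow S := ⟨0, fun l hl => (hpos l hl).le⟩
  have hmem : sInf S ∈ S := (hC.1.preimage (by fun_prop)).csInf_mem hne hbdd
  refine ⟨sInf S, hpos _ hmem, hmem, le_antisymm (sInf_le ⟨_, hmem, rfl⟩) ?_⟩
  exact le_sInf (by rintro _ ⟨l, hl, rfl⟩; exact EReal.coe_le_coe_iff.2 (csInf_le hbdd hl))

theorem supRatio_self (hC : IsProperCone C) (hc : c ∈ C) (hc0 : c ≠ 0) : supRatio C c c = 1 := by
  refine le_antisymm (sInf_le ⟨1, by simpa using hC.zero_mem, EReal.coe_one⟩) (le_sInf ?_)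
  rintro _ ⟨l, hl, rfl⟩
  have : (l - 1) • c ∈ C := by rwa [sub_smul, one_smul]
  exact EReal.coe_le_coe_iff.2 (sub_nonneg.1 (hC.nonneg_of_smul_mem hc hc0 this))

theorem hilbertDist_self (hC : IsProperCone C) (hc : c ∈ C) (hc0 : c ≠ 0) :
    hilbertDist C c c = 0 := by
  simp [hilbertDist, hC.supRatio_self hc hc0, ← EReal.coe_one, EReal.coe_ne_top]

theorem exists_sandwich_of_hilbertDist_le (hC : IsProperCone C) {y z : V} (hy : y ∈ C \ {0})
    (hz : z ∈ C \ {0}) {D : ℝ} (hD : hilbertDist C y z ≤ D) :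
    ∃ α β : ℝ, 0 < α ∧ α ≤ β ∧ β ≤ Real.exp D * α ∧ y - α • z ∈ C ∧ β • z - y ∈ C := by
  obtain ⟨hy, hy0 : y ≠ 0⟩ := hy
  obtain ⟨hz, hz0 : z ≠ 0⟩ := hz
  have hfin : ¬(supRatio C y z = ⊤ ∨ supRatio C z y = ⊤) := by
    intro h
    rw [hilbertDist, if_pos h] at hD
    exact EReal.coe_ne_top D (top_le_iff.1 hD)
  obtain ⟨hyz, hzy⟩ := not_or.1 hfin
  obtain ⟨β, hβ, hβmem, hβeq⟩ := hC.exists_supRatio_eq hy hz hy0 hz0 hyz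
  obtain ⟨γ, hγ, hγmem, hγeq⟩ := hC.exists_supRatio_eq hz hy hz0 hy0 hzy
  have hβγ : β * γ ≤ Real.exp D := by
    rw [hilbertDist, if_neg hfin, hβeq, hγeq] at hD
    exact (Real.log_le_iff_le_exp (by positivity)).1 (by exact_mod_cast hD)
  have hαmem : y - γ⁻¹ • z ∈ C := by
    convert hC.smul_mem (inv_nonneg.2 hγ.le) hγmem using 1
    rw [smul_sub, smul_smul, inv_mul_cancel₀ hγ.ne', one_smul]
  refine ⟨γ⁻¹, β, inv_pos.2 hγ, ?_, ?_, hαmem, hβmem⟩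
  · refine sub_nonneg.1 (hC.nonneg_of_smul_mem hz hz0 ?_)
    convert hC.add_mem hβmem hαmem using 1
    module
  · calc β = β * γ * γ⁻¹ := by field_simp
      _ ≤ Real.exp D * γ⁻¹ := by gcongr

end IsProperCone

theorem le_projDiam {C : Set V} {C' : Set V'} (T : V →ₗ[ℝ] V') {a b : V} (ha : a ∈ C \ {0})
    (hb : b ∈ C \ {0}) : hilbertDist C' (T a) (T b) ≤ projDiam C C' T :=
  le_iSup₂_of_le a ha (le_iSup₂_of_le b hb le_rfl)

theorem IsProperCone.projDiam_nonneg {C : Set V} {C' : Set V'} (hC' : IsProperCone C')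
    {T : V →ₗ[ℝ] V'} {c : V} (hc : c ∈ C \ {0}) (hTc : T c ∈ C' \ {0}) : 0 ≤ projDiam C C' T :=
  (hC'.hilbertDist_self hTc.1 hTc.2).symm.le.trans (le_projDiam T hc hc)

theorem tanhQuarter_nonneg {x : EReal} (hx : 0 ≤ x) : 0 ≤ tanhQuarter x := by
  unfold tanhQuarter
  split_ifs
  · exact zero_le_one
  · rw [Real.tanh_eq_sinh_div_cosh]
    have : 0 ≤ x.toReal / 4 := by have := EReal.toReal_nonneg hx; positivity
    positivity

theorem IsProperCone.tanhQuarter_projDiam_nonneg {C : Set V} (hC : IsProperCone C) {c : V}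
    (hc : c ∈ C) (hc0 : c ≠ 0) {T : V →ₗ[ℝ] V} (hfix : T c = c) :
    0 ≤ tanhQuarter (projDiam C C T) :=
  tanhQuarter_nonneg (hC.projDiam_nonneg ⟨hc, hc0⟩ (by rw [hfix]; exact ⟨hc, hc0⟩))

/-- With `s = exp (D / 2)` one has `tanh (D / 4) = (s - 1) / (s + 1)`, the value of the left side
at `β = s ^ 2 * α`, `α * β = 1`. -/
theorem div_one_add_sub_div_one_add_le_tanh {α β D : ℝ} (hα : 0 < α) (hαβ : α ≤ β)
    (hβ : β ≤ Real.exp D * α) : β / (1 + β) - α / (1 + α) ≤ Real.tanh (D / 4) := by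
  set s := Real.exp (D / 4) ^ 2 with hs
  have hs2 : Real.exp D = s ^ 2 := by rw [hs, ← pow_mul, ← Real.exp_nat_mul]; ring_nf
  have htanh : Real.tanh (D / 4) = (s - 1) / (s + 1) := by
    rw [Real.tanh_eq, Real.exp_neg, hs]
    field_simp
  rw [htanh]
  rw [hs2] at hβ
  have hs1 : 1 ≤ s := by
    have : 1 ≤ s ^ 2 := le_of_mul_le_mul_right (by linarith) hα
    nlinarith [Real.exp_pos (D / 4)]
  rw [div_sub_div _ _ (by linarith) (by linarith), div_le_div_iff₀ (by nlinarith) (by linarith)]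
  nlinarith [mul_nonneg (sub_nonneg.2 hs1) (sub_nonneg.2 hβ),
    mul_nonneg (sub_nonneg.2 hs1) (sub_nonneg.2 hαβ),
    mul_nonneg (sub_nonneg.2 hs1) (sq_nonneg (1 - s * α))]

def IsProperCone.orderIdeal {C : Set V} (hC : IsProperCone C) (c : V) : Submodule ℝ V where
  carrier := {v | ∃ m M : ℝ, v - m • c ∈ C ∧ M • c - v ∈ C}
  add_mem' := by
    rintro v w ⟨m, M, hm, hM⟩ ⟨m', M', hm', hM'⟩
    refine ⟨m + m', M + M', ?_, ?_⟩
    · convert hC.add_mem hm hm' using 1; module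
    · convert hC.add_mem hM hM' using 1; module
  zero_mem' := ⟨0, 0, by simpa using hC.zero_mem, by simpa using hC.zero_mem⟩
  smul_mem' := by
    rintro r v ⟨m, M, hm, hM⟩
    rcases le_total 0 r with hr | hr
    · refine ⟨r * m, r * M, ?_, ?_⟩
      · convert hC.smul_mem hr hm using 1; module
      · convert hC.smul_mem hr hM using 1; module
    · refine ⟨r * M, r * m, ?_, ?_⟩
      · convert hC.smul_mem (neg_nonneg.2 hr) hM using 1; module
      · convert hC.smul_mem (neg_nonneg.2 hr) hm using 1; module

/-- The oscillation of `v` relative to `c`, a real-valued `oscRatio C v c`; it takes the junk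
value `0` when `v` is not in the order ideal of `c`. -/
def osc (C : Set V) (c v : V) : ℝ :=
  sInf {d : ℝ | ∃ m M : ℝ, v - m • c ∈ C ∧ M • c - v ∈ C ∧ d = M - m}

namespace IsProperCone

variable {C : Set V} (hC : IsProperCone C) {c : V} (hc : c ∈ C) (hc0 : c ≠ 0)

include hC hc hc0

theorem osc_le {v : V} {m M : ℝ} (hm : v - m • c ∈ C) (hM : M • c - v ∈ C) :
    osc C c v ≤ M - m := by
  refine csInf_le ⟨0, ?_⟩ ⟨m, M, hm, hM, rfl⟩
  rintro _ ⟨m, M, hm, hM, rfl⟩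
  exact sub_nonneg.2 (hC.le_of_sub_smul_mem_of_smul_sub_mem hc hc0 hm hM)

theorem osc_nonneg (v : V) : 0 ≤ osc C c v := by
  refine Real.sInf_nonneg ?_
  rintro _ ⟨m, M, hm, hM, rfl⟩
  exact sub_nonneg.2 (hC.le_of_sub_smul_mem_of_smul_sub_mem hc hc0 hm hM)

theorem osc_smul_self (s : ℝ) : osc C c (s • c) = 0 := by
  refine le_antisymm ?_ (hC.osc_nonneg hc hc0 _)
  simpa using hC.osc_le hc hc0 (m := s) (M := s) (by simpa using hC.zero_mem)
    (by simpa using hC.zero_mem)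

theorem exists_osc_eq {v : V} (hv : v ∈ hC.orderIdeal c) :
    ∃ m M : ℝ, v - m • c ∈ C ∧ M • c - v ∈ C ∧ osc C c v = M - m := by
  obtain ⟨m₀, M₀, hm₀, hM₀⟩ := hv
  set A := {m : ℝ | v - m • c ∈ C}
  set B := {M : ℝ | M • c - v ∈ C}
  have hA : BddAbove A := ⟨M₀, fun m hm => hC.le_of_sub_smul_mem_of_smul_sub_mem hc hc0 hm hM₀⟩
  have hB : BddBelow B := ⟨m₀, fun M hM => hC.le_of_sub_smul_mem_of_smul_sub_mem hc hc0 hm₀ hM⟩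
  have hmA : sSup A ∈ A := (hC.1.preimage (by fun_prop)).csSup_mem ⟨m₀, hm₀⟩ hA
  have hmB : sInf B ∈ B := (hC.1.preimage (by fun_prop)).csInf_mem ⟨M₀, hM₀⟩ hB
  refine ⟨sSup A, sInf B, hmA, hmB, (hC.osc_le hc hc0 hmA hmB).antisymm ?_⟩
  refine le_csInf ⟨_, _, _, hm₀, hM₀, rfl⟩ ?_
  rintro _ ⟨m, M, hm, hM, rfl⟩
  linarith [csInf_le hB hM, le_csSup hA hm]

theorem eq_smul_of_osc_eq_zero {v : V} (hv : v ∈ hC.orderIdeal c) (h : osc C c v = 0) :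
    ∃ s : ℝ, v = s • c := by
  obtain ⟨m, M, hm, hM, hosc⟩ := hC.exists_osc_eq hc hc0 hv
  obtain rfl : M = m := by linarith
  exact ⟨M, sub_eq_zero.1 (hC.eq_zero_of_mem_of_neg_mem hm (by rwa [neg_sub]))⟩

theorem osc_smul_le {v : V} (hv : v ∈ hC.orderIdeal c) (r : ℝ) :
    osc C c (r • v) ≤ |r| * osc C c v := by
  obtain ⟨m, M, hm, hM, hosc⟩ := hC.exists_osc_eq hc hc0 hv
  rw [hosc]
  rcases le_total 0 r with hr | hr
  · calc osc C c (r • v) ≤ r * M - r * m := by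
          refine hC.osc_le hc hc0 ?_ ?_
          · convert hC.smul_mem hr hm using 1; module
          · convert hC.smul_mem hr hM using 1; module
      _ = |r| * (M - m) := by rw [abs_of_nonneg hr]; ring
  · calc osc C c (r • v) ≤ r * m - r * M := by
          refine hC.osc_le hc hc0 ?_ ?_
          · convert hC.smul_mem (neg_nonneg.2 hr) hM using 1; module
          · convert hC.smul_mem (neg_nonneg.2 hr) hm using 1; module
      _ = |r| * (M - m) := by rw [abs_of_nonpos hr]; ring

theorem osc_smul {v : V} (hv : v ∈ hC.orderIdeal c) (r : ℝ) :
    osc C c (r • v) = |r| * osc C c v := by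
  refine (hC.osc_smul_le hc hc0 hv r).antisymm ?_
  rcases eq_or_ne r 0 with rfl | hr
  · simpa using hC.osc_nonneg hc hc0 _
  calc |r| * osc C c v = |r| * osc C c (r⁻¹ • r • v) := by rw [inv_smul_smul₀ hr]
    _ ≤ |r| * (|r⁻¹| * osc C c (r • v)) := by
        gcongr
        exact hC.osc_smul_le hc hc0 (Submodule.smul_mem _ r hv) r⁻¹
    _ = osc C c (r • v) := by rw [abs_inv, ← mul_assoc, mul_inv_cancel₀ (abs_ne_zero.2 hr), one_mul]

theorem osc_add_le {v w : V} (hv : v ∈ hC.orderIdeal c) (hw : w ∈ hC.orderIdeal c) :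
    osc C c (v + w) ≤ osc C c v + osc C c w := by
  obtain ⟨m, M, hm, hM, hv⟩ := hC.exists_osc_eq hc hc0 hv
  obtain ⟨m', M', hm', hM', hw⟩ := hC.exists_osc_eq hc hc0 hw
  calc osc C c (v + w) ≤ (M + M') - (m + m') := by
        refine hC.osc_le hc hc0 ?_ ?_
        · convert hC.add_mem hm hm' using 1; module
        · convert hC.add_mem hM hM' using 1; module
    _ = osc C c v + osc C c w := by rw [hv, hw]; ring

theorem osc_cos_smul_add_sin_smul_le {v w : V} (hv : v ∈ hC.orderIdeal c)
    (hw : w ∈ hC.orderIdeal c) (θ : ℝ) :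
    osc C c (Real.cos θ • v + Real.sin θ • w) ≤ osc C c v + osc C c w := by
  refine (hC.osc_add_le hc hc0 (Submodule.smul_mem _ _ hv) (Submodule.smul_mem _ _ hw)).trans ?_
  rw [hC.osc_smul hc hc0 hv, hC.osc_smul hc hc0 hw]
  gcongr
  · exact mul_le_of_le_one_left (hC.osc_nonneg hc hc0 v) (Real.abs_cos_le_one θ)
  · exact mul_le_of_le_one_left (hC.osc_nonneg hc hc0 w) (Real.abs_sin_le_one θ)

theorem osc_le_of_sandwich {w : V} {m M α β : ℝ} (hα : 0 < α) (hβ : 0 < β)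
    (hαmem : (w - m • c) - α • (M • c - w) ∈ C) (hβmem : β • (M • c - w) - (w - m • c) ∈ C) :
    osc C c w ≤ (M - m) * (β / (1 + β) - α / (1 + α)) := by
  calc osc C c w ≤ (m + (M - m) * (β / (1 + β))) - (m + (M - m) * (α / (1 + α))) := by
        refine hC.osc_le hc hc0 ?_ ?_
        · convert hC.smul_mem (inv_nonneg.2 (by linarith : 0 ≤ 1 + α)) hαmem using 1
          match_scalars <;> field_simp <;> ring
        · convert hC.smul_mem (inv_nonneg.2 (by linarith : 0 ≤ 1 + β)) hβmem using 1
          match_scalars <;> field_simp <;> ring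
    _ = (M - m) * (β / (1 + β) - α / (1 + α)) := by ring

theorem osc_le_tanh_mul {w : V} {m M D : ℝ} (hm : w - m • c ∈ C \ {0}) (hM : M • c - w ∈ C \ {0})
    (hD : hilbertDist C (w - m • c) (M • c - w) ≤ D) :
    osc C c w ≤ Real.tanh (D / 4) * (M - m) := by
  obtain ⟨α, β, hα, hαβ, hβ, hαmem, hβmem⟩ := hC.exists_sandwich_of_hilbertDist_le hm hM hD
  have hmM : m ≤ M := hC.le_of_sub_smul_mem_of_smul_sub_mem hc hc0 hm.1 hM.1
  calc osc C c w ≤ (M - m) * (β / (1 + β) - α / (1 + α)) :=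
        hC.osc_le_of_sandwich hc hc0 hα (hα.trans_le hαβ) hαmem hβmem
    _ ≤ (M - m) * Real.tanh (D / 4) :=
        mul_le_mul_of_nonneg_left (div_one_add_sub_div_one_add_le_tanh hα hαβ hβ) (sub_nonneg.2 hmM)
    _ = Real.tanh (D / 4) * (M - m) := mul_comm _ _

end IsProperCone

namespace IsProperCone

variable {C : Set V} (hC : IsProperCone C) {c : V} (hc : c ∈ C) (hc0 : c ≠ 0)
  {T : V →ₗ[ℝ] V} (hT : ∀ x ∈ C, T x ∈ C) (hfix : T c = c) (hΔ : projDiam C C T ≠ ⊤)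

include hC hc hc0 hT hfix hΔ

theorem range_le_orderIdeal : LinearMap.range T ≤ hC.orderIdeal c := by
  rw [LinearMap.range_eq_map, ← hC.2.2.2.2, Submodule.map_span, Submodule.span_le]
  rintro _ ⟨p, hp, rfl⟩
  rcases eq_or_ne (T p) 0 with h0 | h0
  · rw [h0]
    exact (hC.orderIdeal c).zero_mem
  have hp0 : p ≠ 0 := fun h => h0 (by rw [h, map_zero])
  have hD : hilbertDist C (T p) c ≤ (projDiam C C T).toReal := by
    rw [← hfix]
    exact (le_projDiam T ⟨hp, hp0⟩ ⟨hc, hc0⟩).trans (EReal.le_coe_toReal hΔ)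
  obtain ⟨α, β, -, -, -, hα, hβ⟩ :=
    hC.exists_sandwich_of_hilbertDist_le ⟨hT p hp, h0⟩ ⟨hc, hc0⟩ hD
  exact ⟨α, β, hα, hβ⟩

theorem osc_map_le {v : V} (hv : v ∈ hC.orderIdeal c) :
    osc C c (T v) ≤ tanhQuarter (projDiam C C T) * osc C c v := by
  have hk_osc :=
    mul_nonneg (hC.tanhQuarter_projDiam_nonneg hc hc0 hfix) (hC.osc_nonneg hc hc0 v)
  obtain ⟨m, M, hm, hM, hosc⟩ := hC.exists_osc_eq hc hc0 hv
  have hTm : T v - m • c = T (v - m • c) := by rw [map_sub, map_smul, hfix]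
  have hTM : M • c - T v = T (M • c - v) := by rw [map_sub, map_smul, hfix]
  rcases eq_or_ne (T (v - m • c)) 0 with h0 | hm0
  · rw [← hTm, sub_eq_zero] at h0
    rwa [h0, hC.osc_smul_self hc hc0]
  rcases eq_or_ne (T (M • c - v)) 0 with h0 | hM0
  · rw [← hTM, sub_eq_zero] at h0
    rwa [← h0, hC.osc_smul_self hc hc0]
  have hne {x : V} (hx : x ∈ C) (hTx : T x ≠ 0) : x ∈ C \ {0} :=
    ⟨hx, fun h => hTx (by rw [Set.mem_singleton_iff.1 h, map_zero])⟩
  rw [tanhQuarter, if_neg hΔ, hosc]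
  refine hC.osc_le_tanh_mul hc hc0 (hTm ▸ ⟨hT _ hm, hm0⟩) (hTM ▸ ⟨hT _ hM, hM0⟩) ?_
  rw [hTm, hTM]
  exact (le_projDiam T (hne hm hm0) (hne hM hM0)).trans (EReal.le_coe_toReal hΔ)

end IsProperCone

theorem le_of_forall_mul_le_mul_apply {ι : Type*} {f : ι → ℝ} {σ : ι → ι} {ρ k : ℝ}
    (hf : BddAbove (Set.range f)) (hk : 0 ≤ k) (hpos : ∃ i, 0 < f i)
    (h : ∀ i, ρ * f i ≤ k * f (σ i)) : ρ ≤ k := by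
  obtain ⟨i₀, hi₀⟩ := hpos
  have : Nonempty ι := ⟨i₀⟩
  have hS : 0 < ⨆ i, f i := hi₀.trans_le (le_ciSup hf i₀)
  rcases lt_or_ge ρ 0 with hρ | hρ
  · linarith
  refine le_of_mul_le_mul_right ?_ hS
  calc ρ * ⨆ i, f i = ⨆ i, ρ * f i := Real.mul_iSup_of_nonneg hρ f
    _ ≤ k * ⨆ i, f i :=
        ciSup_le fun i => (h i).trans (mul_le_mul_of_nonneg_left (le_ciSup hf (σ i)) hk)

section Complexification

open TensorProduct Complex

variable (W : Type*) [AddCommGroup W] [Module ℝ W]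

def complexRe : ℂ ⊗[ℝ] W →ₗ[ℝ] W :=
  TensorProduct.lift ((LinearMap.lsmul ℝ W).comp Complex.reLm)

def complexIm : ℂ ⊗[ℝ] W →ₗ[ℝ] W :=
  TensorProduct.lift ((LinearMap.lsmul ℝ W).comp Complex.imLm)

variable {W}

@[simp]
theorem complexRe_tmul (z : ℂ) (w : W) : complexRe W (z ⊗ₜ w) = z.re • w := by
  simp [complexRe]

@[simp]
theorem complexIm_tmul (z : ℂ) (w : W) : complexIm W (z ⊗ₜ w) = z.im • w := by
  simp [complexIm]

theorem complexRe_baseChange (T : W →ₗ[ℝ] W) (a : ℂ ⊗[ℝ] W) :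
    complexRe W (T.baseChange ℂ a) = T (complexRe W a) := by
  induction a using TensorProduct.induction_on with
  | zero => simp
  | tmul z w => simp
  | add a b ha hb => simp [ha, hb]

theorem complexRe_smul (z : ℂ) (a : ℂ ⊗[ℝ] W) :
    complexRe W (z • a) = z.re • complexRe W a - z.im • complexIm W a := by
  induction a using TensorProduct.induction_on with
  | zero => simp
  | tmul x w =>
    rw [smul_tmul', complexRe_tmul, complexRe_tmul, complexIm_tmul, smul_eq_mul, mul_re]
    module
  | add a b ha hb =>
    simp only [smul_add, map_add, ha, hb]
    module

theorem one_tmul_complexRe_add_I_tmul_complexIm (a : ℂ ⊗[ℝ] W) :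
    (1 : ℂ) ⊗ₜ complexRe W a + I ⊗ₜ complexIm W a = a := by
  induction a using TensorProduct.induction_on with
  | zero => simp
  | tmul z w =>
    rw [complexRe_tmul, complexIm_tmul, tmul_smul, tmul_smul, smul_tmul', smul_tmul',
      ← add_tmul]
    congr 1
    apply Complex.ext <;> simp
  | add a b ha hb =>
    rw [map_add, map_add, tmul_add, tmul_add, add_add_add_comm, ha, hb]

theorem eq_smul_one_tmul_of_complexRe_of_complexIm {a : ℂ ⊗[ℝ] W} {w : W} {s t : ℝ}
    (hre : complexRe W a = s • w) (him : complexIm W a = t • w) :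
    a = (s + t * I) • ((1 : ℂ) ⊗ₜ[ℝ] w) := by
  rw [← one_tmul_complexRe_add_I_tmul_complexIm a, hre, him, tmul_smul, tmul_smul, smul_tmul',
    smul_tmul', ← add_tmul, smul_tmul', smul_eq_mul, mul_one]
  congr 1
  apply Complex.ext <;> simp

theorem map_complexRe_exp_smul_of_baseChange_eq_smul {T : W →ₗ[ℝ] W} {a : ℂ ⊗[ℝ] W} {lam : ℂ}
    (heig : T.baseChange ℂ a = lam • a) (θ : ℝ) :
    T (complexRe W (exp ((θ - lam.arg : ℝ) * I) • a)) = ‖lam‖ • complexRe W (exp (θ * I) • a) := by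
  have hrot : exp ((θ - lam.arg : ℝ) * I) * lam = (‖lam‖ : ℂ) * exp (θ * I) := by
    calc exp ((θ - lam.arg : ℝ) * I) * lam
        = exp ((θ - lam.arg : ℝ) * I) * (‖lam‖ * exp (lam.arg * I)) := by
          rw [norm_mul_exp_arg_mul_I]
      _ = (‖lam‖ : ℂ) * exp (θ * I) := by
          rw [mul_left_comm, ← exp_add]
          push_cast
          ring_nf
  rw [← complexRe_baseChange, map_smul, heig, smul_smul, hrot, mul_smul, complexRe_smul,
    complexRe_smul (exp _)]
  simp

end Complexification

open TensorProduct in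
theorem spectral_bound_on_projective_diameter_general
    {V : Type*} [NormedAddCommGroup V] [InnerProductSpace ℝ V]
    (C : Set V) (hC : IsProperCone C)
    (T : V →ₗ[ℝ] V) (hT : ∀ x ∈ C, T x ∈ C)
    (c : V) (hcC : c ∈ C) (hc0 : c ≠ 0) (hfix : T c = c)
    (hΔ : projDiam C C T < ⊤)
    (lam : ℂ) (a : ℂ ⊗[ℝ] V)
    (heig : LinearMap.baseChange ℂ T a = lam • a)
    (hnc : ∀ z : ℂ, a ≠ z • ((1 : ℂ) ⊗ₜ[ℝ] c)) :
    ‖lam‖ ≤ tanhQuarter (projDiam C C T) := by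
  have hk := hC.tanhQuarter_projDiam_nonneg hcC hc0 hfix
  rcases eq_or_ne lam 0 with rfl | hlam
  · simpa using hk
  set u : ℝ → V := fun θ => complexRe V (Complex.exp (θ * Complex.I) • a)
  have hTu (θ : ℝ) : T (u (θ - lam.arg)) = ‖lam‖ • u θ :=
    map_complexRe_exp_smul_of_baseChange_eq_smul heig θ
  have hu (θ : ℝ) : u θ ∈ hC.orderIdeal c := by
    have := hC.range_le_orderIdeal hcC hc0 hT hfix hΔ.ne ⟨_, hTu θ⟩
    simpa [hlam] using (hC.orderIdeal c).smul_mem ‖lam‖⁻¹ this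
  have hu_eq (θ : ℝ) : u θ = Real.cos θ • u 0 + Real.sin θ • u (Real.pi / 2) := by
    simp [u, complexRe_smul, sub_eq_add_neg]
  refine le_of_forall_mul_le_mul_apply (f := fun θ => osc C c (u θ)) (σ := (· - lam.arg))
    ⟨osc C c (u 0) + osc C c (u (Real.pi / 2)), ?_⟩ hk ?_ fun θ => ?_
  · rintro _ ⟨θ, rfl⟩
    simpa only [← hu_eq] using
      hC.osc_cos_smul_add_sin_smul_le hcC hc0 (hu 0) (hu (Real.pi / 2)) θ
  · by_contra! h
    have hosc_zero (θ : ℝ) : osc C c (u θ) = 0 := (h θ).antisymm (hC.osc_nonneg hcC hc0 _)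
    obtain ⟨s, hs⟩ := hC.eq_smul_of_osc_eq_zero hcC hc0 (hu 0) (hosc_zero 0)
    obtain ⟨t, ht⟩ := hC.eq_smul_of_osc_eq_zero hcC hc0 (hu (Real.pi / 2)) (hosc_zero _)
    refine hnc _ (eq_smul_one_tmul_of_complexRe_of_complexIm (t := -t) (by simpa [u] using hs) ?_)
    simpa [u, complexRe_smul, neg_eq_iff_eq_neg] using ht
  · calc ‖lam‖ * osc C c (u θ) = osc C c (‖lam‖ • u θ) := by
          rw [hC.osc_smul hcC hc0 (hu θ), abs_norm]
      _ = osc C c (T (u (θ - lam.arg))) := by rw [hTu]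
      _ ≤ tanhQuarter (projDiam C C T) * osc C c (u (θ - lam.arg)) :=
          hC.osc_map_le hcC hc0 hT hfix hΔ.ne (hu _)

open TensorProduct in
/-- **Spectral bound on the projective diameter.** -/
theorem spectral_bound_on_projective_diameter
    {V : Type*} [NormedAddCommGroup V] [InnerProductSpace ℝ V] [FiniteDimensional ℝ V]
    (C : Set V) (hC : IsProperCone C)
    (T : V →ₗ[ℝ] V) (hT : ∀ x ∈ C, T x ∈ C)
    (c : V) (hcC : c ∈ C) (hc0 : c ≠ 0) (hfix : T c = c)
    (hΔ : projDiam C C T < ⊤)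
    (lam : ℂ) (a : ℂ ⊗[ℝ] V) (ha0 : a ≠ 0)
    (heig : LinearMap.baseChange ℂ T a = lam • a)
    (hnc : ∀ z : ℂ, a ≠ z • ((1 : ℂ) ⊗ₜ[ℝ] c)) :
    ‖lam‖ ≤ tanhQuarter (projDiam C C T) :=
  spectral_bound_on_projective_diameter_general C hC T hT c hcC hc0 hfix hΔ lam a heig hnc
end
end

section
/- (Base norm vs. Hilbert's projective metric.) Let C ⊆ V be a proper cone with base B = C ∩ {v | ⟨e,v⟩ = 1} for some e in the interior of C*. Then for all b₁, b₂ ∈ B: (1/2)‖b₁−b₂‖_B = N_B(b₁−b₂) ≤ tanh(h_C(b₁,b₂)/4). More generally, for any c₁, c₂ ∈ C with ⟨e,c₂⟩ ≤ ⟨e,c₁⟩: N_B(c₁−c₂) ≤ ⟨e,c₂⟩ · tanh(h_C(c₁,c₂)/4), where tanh(∞/4) := 1. -/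
/-!
Let `β = sup_C(c₁/c₂)` and `γ = sup_C(c₂/c₁)`; both are attained because `C` is closed, and
`tanh (h_C(c₁,c₂)/4) = (√(βγ) - 1)/(√(βγ) + 1)`. Nonnegative multiples of the cone elements
`γ c₁ - c₂` and `β c₂ - c₁` decompose `c₁ - c₂` with negative part of `e`-mass at most
`⟨e, c₂⟩ (β - 1)(γ - 1)/(βγ - 1)` (if `γ ≤ 1`, already `c₁ - c₂ ∈ C`), and AM-GM,
`2√(βγ) ≤ β + γ`, bounds this factor by `(√(βγ) - 1)/(√(βγ) + 1)`. On the base every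
decomposition of `b₁ - b₂` has parts of equal `e`-mass, so the base norm is twice the negativity.
-/

noncomputable section

variable {V : Type*} [NormedAddCommGroup V] [InnerProductSpace ℝ V]

variable {V' : Type*} [NormedAddCommGroup V'] [InnerProductSpace ℝ V']

open RealInnerProductSpace Topology Filter

theorem IsProperCone.smul_mem_s5 {C : Set V} (hC : IsProperCone C) {r : ℝ} (hr : 0 ≤ r) {x : V}
    (hx : x ∈ C) : r • x ∈ C :=
  hC.2.2.1 r hr x hx

theorem IsProperCone.zero_mem_s5 {C : Set V} (hC : IsProperCone C) : (0 : V) ∈ C :=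
  (hC.2.2.2.1.symm ▸ Set.mem_singleton 0 : (0 : V) ∈ C ∩ -C).1

theorem IsProperCone.add_mem_s5 {C : Set V} (hC : IsProperCone C) {x y : V} (hx : x ∈ C)
    (hy : y ∈ C) : x + y ∈ C := by
  have hmid : (1 / 2 : ℝ) • x + (1 / 2 : ℝ) • y ∈ C :=
    hC.2.1 hx hy (by norm_num) (by norm_num) (by norm_num)
  convert hC.smul_mem_s5 zero_le_two hmid using 1
  rw [smul_add, smul_smul, smul_smul]
  norm_num

theorem IsProperCone.eq_zero_of_neg_mem {C : Set V} (hC : IsProperCone C) {x : V} (hx : x ∈ C)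
    (hnx : -x ∈ C) : x = 0 := by
  have hx' : x ∈ C ∩ -C := ⟨hx, by simpa [Set.mem_neg] using hnx⟩
  rwa [hC.2.2.2.1] at hx'

/-- `sup_C(a/b) * sup_C(b/a) ≥ 1`, i.e. Hilbert's metric is nonnegative. -/
theorem IsProperCone.one_le_mul_of_smul_sub_mem {C : Set V} (hC : IsProperCone C) {a b : V}
    (ha : a ∈ C) (ha0 : a ≠ 0) {β γ : ℝ} (hβ : 0 ≤ β) (hab : β • b - a ∈ C)
    (hba : γ • a - b ∈ C) : 1 ≤ β * γ := by
  by_contra! hlt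
  have hmem : (β * γ - 1) • a ∈ C := by
    convert hC.add_mem_s5 (hC.smul_mem_s5 hβ hba) hab using 1
    rw [sub_smul, mul_smul, smul_sub, one_smul]
    abel
  have hneg : -a ∈ C := by
    convert hC.smul_mem_s5 (inv_nonneg.2 (sub_nonneg.2 hlt.le)) hmem using 1
    rw [smul_smul, show (1 - β * γ)⁻¹ * (β * γ - 1) = -1 by field_simp; ring, neg_one_smul]
  exact ha0 (hC.eq_zero_of_neg_mem ha hneg)

theorem inner_pos_of_mem_interior_dualConeSet {C : Set V} {e c : V}
    (he : e ∈ interior (dualConeSet C)) (hc : c ∈ C) (hc0 : c ≠ 0) : 0 < ⟪e, c⟫ := by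
  have hnear : ∀ᶠ t in 𝓝[>] (0 : ℝ), e - t • c ∈ dualConeSet C := by
    have hcont : Tendsto (fun t : ℝ => e - t • c) (𝓝 0) (𝓝 e) :=
      (by fun_prop : Continuous fun t : ℝ => e - t • c).tendsto' 0 e (by simp)
    exact nhdsWithin_le_nhds (hcont (mem_interior_iff_mem_nhds.1 he))
  obtain ⟨t, hdual, ht⟩ := (hnear.and self_mem_nhdsWithin).exists
  have h := hdual c hc
  rw [inner_sub_left, real_inner_smul_left, real_inner_self_eq_norm_sq] at h
  have hpos : 0 < t * ‖c‖ ^ 2 := mul_pos ht (by positivity)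
  linarith

theorem exists_supRatio_eq {C : Set V} (hC : IsClosed C) {e a b : V} (he : e ∈ dualConeSet C)
    (hb : 0 < ⟪e, b⟫) (hfin : supRatio C a b ≠ ⊤) :
    ∃ β : ℝ, supRatio C a b = β ∧ β • b - a ∈ C := by
  set S := {l : ℝ | l • b - a ∈ C}
  have hne : S.Nonempty := by
    refine Set.nonempty_iff_ne_empty.2 fun hS => hfin ?_
    simp only [supRatio, S, hS, Set.image_empty, sInf_empty]
  have hbdd : BddBelow S := by
    refine ⟨⟪e, a⟫ / ⟪e, b⟫, fun l hl => ?_⟩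
    have h := he _ hl
    rw [inner_sub_right, real_inner_smul_right] at h
    rw [div_le_iff₀ hb]
    linarith
  have hleast : IsLeast S (sInf S) :=
    ⟨(hC.preimage (by fun_prop)).csInf_mem hne hbdd, fun l hl => csInf_le hbdd hl⟩
  exact ⟨sInf S, ((EReal.coe_strictMono.monotone.map_isLeast hleast).csInf_eq), hleast.1⟩

theorem hilbertDist_eq_log {C : Set V} {a b : V} {β γ : ℝ} (hβ : supRatio C a b = β)
    (hγ : supRatio C b a = γ) : hilbertDist C a b = (Real.log (β * γ) : ℝ) := by
  simp [hilbertDist, hβ, hγ]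

theorem tanhQuarter_top : tanhQuarter ⊤ = 1 :=
  if_pos rfl

theorem tanhQuarter_log {P : ℝ} (hP : 0 < P) :
    tanhQuarter (Real.log P : ℝ) = (√P - 1) / (√P + 1) := by
  rw [tanhQuarter, if_neg (EReal.coe_ne_top _), EReal.toReal_coe, Real.tanh_eq, Real.exp_neg]
  set E := Real.exp (Real.log P / 4)
  have hE : 0 < E := Real.exp_pos _
  have hsq : E ^ 2 = √P := by
    rw [← Real.exp_log hP, ← Real.exp_half, ← Real.exp_nat_mul]
    ring_nf
  rw [← hsq]
  field_simp

theorem negativity_le {C : Set V} {e v cp cm : V} (he : e ∈ dualConeSet C) (hcp : cp ∈ C)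
    (hcm : cm ∈ C) (hv : v = cp - cm) : negativity C e v ≤ ⟪e, cm⟫ :=
  csInf_le ⟨0, by rintro r ⟨_, _, cm', hcm', _, rfl⟩; exact he cm' hcm'⟩ ⟨cp, hcp, cm, hcm, hv, rfl⟩

theorem negativity_nonpos {C : Set V} (hC : IsProperCone C) {e v : V} (he : e ∈ dualConeSet C)
    (hv : v ∈ C) : negativity C e v ≤ 0 := by
  simpa using negativity_le he hv hC.zero_mem_s5 (sub_zero v).symm

theorem baseNorm_eq_two_mul_negativity {C : Set V} {e v : V} (hv : ⟪e, v⟫ = 0) :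
    baseNorm C e v = 2 * negativity C e v := by
  rw [baseNorm, negativity, ← smul_eq_mul, ← Real.sInf_smul_of_nonneg zero_le_two]
  congr 1
  ext r
  simp only [Set.mem_smul_set, Set.mem_ofPred_eq, smul_eq_mul]
  constructor
  · rintro ⟨cp, hcp, cm, hcm, rfl, rfl⟩
    refine ⟨_, ⟨cp, hcp, cm, hcm, rfl, rfl⟩, ?_⟩
    rw [inner_sub_right] at hv
    linarith
  · rintro ⟨_, ⟨cp, hcp, cm, hcm, rfl, rfl⟩, rfl⟩
    refine ⟨cp, hcp, cm, hcm, rfl, ?_⟩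
    rw [inner_sub_right] at hv
    linarith

/-- The decomposition `a - b = p • (γ • a - b) - s • (β • b - a)` with
`p = (β - 1) / (β * γ - 1)` and `s = (γ - 1) / (β * γ - 1)`. -/
theorem negativity_sub_le {C : Set V} (hC : IsProperCone C) {e a b : V} (he : e ∈ dualConeSet C)
    {β γ : ℝ} (hβ : 1 ≤ β) (hγ : 1 ≤ γ) (hβγ : 1 < β * γ) (hab : β • b - a ∈ C)
    (hba : γ • a - b ∈ C) :
    negativity C e (a - b) ≤ (γ - 1) / (β * γ - 1) * ⟪e, β • b - a⟫ := by
  have hden : 0 < β * γ - 1 := by linarith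
  set p := (β - 1) / (β * γ - 1)
  set s := (γ - 1) / (β * γ - 1)
  have hp : p * γ + s = 1 := by simp only [p, s]; field_simp; ring
  have hs : p + s * β = 1 := by simp only [p, s]; field_simp; ring
  rw [← real_inner_smul_right]
  refine negativity_le he (hC.smul_mem_s5 (div_nonneg (sub_nonneg.2 hβ) hden.le) hba)
    (hC.smul_mem_s5 (div_nonneg (sub_nonneg.2 hγ) hden.le) hab) ?_
  calc a - b = (p * γ + s) • a - (p + s * β) • b := by rw [hp, hs, one_smul, one_smul]
    _ = p • (γ • a - b) - s • (β • b - a) := by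
      rw [smul_sub, smul_sub, smul_smul, smul_smul, add_smul, add_smul]
      abel

theorem sub_one_mul_sub_one_div_le {β γ : ℝ} (hβ : 0 ≤ β) (hγ : 0 ≤ γ) (hβγ : 1 < β * γ) :
    (β - 1) * (γ - 1) / (β * γ - 1) ≤ (√(β * γ) - 1) / (√(β * γ) + 1) := by
  have hq : √(β * γ) ^ 2 = β * γ := Real.sq_sqrt (by positivity)
  have hamgm : 2 * √(β * γ) ≤ β + γ := by
    have := two_mul_le_add_sq √β √γ
    rwa [Real.sq_sqrt hβ, Real.sq_sqrt hγ, mul_assoc, ← Real.sqrt_mul hβ] at this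
  rw [div_le_div_iff₀ (by linarith) (by positivity)]
  nlinarith [Real.sqrt_nonneg (β * γ)]

theorem negativity_sub_le_mul_tanhQuarter {C : Set V} (hC : IsProperCone C) {e : V}
    (he : e ∈ interior (dualConeSet C)) {c₁ c₂ : V} (hc₁ : c₁ ∈ C) (hc₂ : c₂ ∈ C)
    (hle : ⟪e, c₂⟫ ≤ ⟪e, c₁⟫) :
    negativity C e (c₁ - c₂) ≤ ⟪e, c₂⟫ * tanhQuarter (hilbertDist C c₁ c₂) := by
  have he' := interior_subset he
  rcases eq_or_ne c₂ 0 with rfl | hc₂0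
  · simpa using negativity_nonpos hC he' (by simpa using hc₁)
  have hμ := inner_pos_of_mem_interior_dualConeSet he hc₂ hc₂0
  have hc₁0 : c₁ ≠ 0 := by rintro rfl; rw [inner_zero_right] at hle; linarith
  by_cases htop : supRatio C c₁ c₂ = ⊤ ∨ supRatio C c₂ c₁ = ⊤
  · rw [hilbertDist, if_pos htop, tanhQuarter_top, mul_one]
    exact negativity_le he' hc₁ hc₂ rfl
  push Not at htop
  obtain ⟨β, hβ, hβmem⟩ := exists_supRatio_eq hC.1 he' hμ htop.1
  obtain ⟨γ, hγ, hγmem⟩ := exists_supRatio_eq hC.1 he' (hμ.trans_le hle) htop.2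
  have hβμ : ⟪e, c₁⟫ ≤ β * ⟪e, c₂⟫ := by
    have := he' _ hβmem
    rw [inner_sub_right, real_inner_smul_right] at this
    linarith
  have hβ1 : 1 ≤ β := by nlinarith
  have hβγ := hC.one_le_mul_of_smul_sub_mem hc₁ hc₁0 (by linarith) hβmem hγmem
  rw [hilbertDist_eq_log hβ hγ, tanhQuarter_log (by linarith)]
  rcases le_or_gt γ 1 with hγ1 | hγ1
  · have hsub : c₁ - c₂ ∈ C := by
      convert hC.add_mem_s5 (hC.smul_mem_s5 (sub_nonneg.2 hγ1) hc₁) hγmem using 1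
      rw [sub_smul, one_smul]
      abel
    have hq : 1 ≤ √(β * γ) := Real.one_le_sqrt.2 hβγ
    exact (negativity_nonpos hC he' hsub).trans
      (mul_nonneg hμ.le (div_nonneg (by linarith) (by positivity)))
  have hβγ' : 1 < β * γ := by nlinarith
  calc negativity C e (c₁ - c₂) ≤ (γ - 1) / (β * γ - 1) * ⟪e, β • c₂ - c₁⟫ :=
        negativity_sub_le hC he' hβ1 hγ1.le hβγ' hβmem hγmem
    _ ≤ (γ - 1) / (β * γ - 1) * ((β - 1) * ⟪e, c₂⟫) := by
        rw [inner_sub_right, real_inner_smul_right]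
        exact mul_le_mul_of_nonneg_left (by linarith) (div_nonneg (by linarith) (by linarith))
    _ = ⟪e, c₂⟫ * ((β - 1) * (γ - 1) / (β * γ - 1)) := by ring
    _ ≤ ⟪e, c₂⟫ * ((√(β * γ) - 1) / (√(β * γ) + 1)) := by
        gcongr ⟪e, c₂⟫ * ?_
        exact sub_one_mul_sub_one_div_le (by linarith) (by linarith) hβγ'

theorem baseNorm_vs_hilbert_metric_general
    {V : Type*} [NormedAddCommGroup V] [InnerProductSpace ℝ V]
    (C : Set V) (hC : IsProperCone C)
    (e : V) (he : e ∈ interior (dualConeSet C))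
    (B : Set V) (hB : B = C ∩ {v : V | (inner ℝ e v : ℝ) = 1}) :
    (∀ b₁ ∈ B, ∀ b₂ ∈ B,
      (1 / 2) * baseNorm C e (b₁ - b₂) = negativity C e (b₁ - b₂) ∧
      negativity C e (b₁ - b₂) ≤ tanhQuarter (hilbertDist C b₁ b₂)) ∧
    (∀ c₁ ∈ C, ∀ c₂ ∈ C, (inner ℝ e c₂ : ℝ) ≤ (inner ℝ e c₁ : ℝ) →
      negativity C e (c₁ - c₂) ≤ (inner ℝ e c₂ : ℝ) * tanhQuarter (hilbertDist C c₁ c₂)) := by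
  refine ⟨fun b₁ hb₁ b₂ hb₂ => ?_,
    fun _ hc₁ _ hc₂ => negativity_sub_le_mul_tanhQuarter hC he hc₁ hc₂⟩
  rw [hB] at hb₁ hb₂
  obtain ⟨hb₁C, hb₁e : ⟪e, b₁⟫ = 1⟩ := hb₁
  obtain ⟨hb₂C, hb₂e : ⟪e, b₂⟫ = 1⟩ := hb₂
  constructor
  · rw [baseNorm_eq_two_mul_negativity (by rw [inner_sub_right, hb₁e, hb₂e, sub_self])]
    ring
  · simpa [hb₂e] using
      negativity_sub_le_mul_tanhQuarter hC he hb₁C hb₂C (by rw [hb₁e, hb₂e])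

/-- **Base norm vs. Hilbert's projective metric.** -/
theorem baseNorm_vs_hilbert_metric
    {V : Type*} [NormedAddCommGroup V] [InnerProductSpace ℝ V] [FiniteDimensional ℝ V]
    (C : Set V) (hC : IsProperCone C)
    (e : V) (he : e ∈ interior (dualConeSet C))
    (B : Set V) (hB : B = C ∩ {v : V | (inner ℝ e v : ℝ) = 1}) :
    (∀ b₁ ∈ B, ∀ b₂ ∈ B,
      (1 / 2) * baseNorm C e (b₁ - b₂) = negativity C e (b₁ - b₂) ∧
      negativity C e (b₁ - b₂) ≤ tanhQuarter (hilbertDist C b₁ b₂)) ∧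
    (∀ c₁ ∈ C, ∀ c₂ ∈ C, (inner ℝ e c₂ : ℝ) ≤ (inner ℝ e c₁ : ℝ) →
      negativity C e (c₁ - c₂) ≤ (inner ℝ e c₂ : ℝ) * tanhQuarter (hilbertDist C c₁ c₂)) :=
  baseNorm_vs_hilbert_metric_general C hC e he B hB
end
end
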